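/- arXiv:1208.5584 — 4 statements merged into one kernel-verified Lean document; each statement's English description precedes it below -/
import Mathlib

section
/- Let X be a chi-squared random variable with n degrees of freedom. Then for any x > 0: P(X − n ≥ 2√(nx) + 2x) ≤ exp(−x) and P(X − n ≤ −2√(nx)) ≤ exp(−x). -/
/-!
Chernoff's method. Tilting the Gamma(a, r) density by `exp (t y)` gives `(r / (r - t)) ^ a` times
the Gamma(a, r - t) density, so the moment generating function of `χ²(k) = Gamma(k/2, 1/2)` is
`(1 - 2t) ^ (-k/2)`. Writing `x = k s²`, the tilt with `1 / (1 - 2t) = 1 + 2s + 2s²` bounds the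
upper tail by `exp (-k (s + s²)) (1 + 2s + 2s²) ^ (k/2)`, and `1 + 2s + 2s² ≤ exp (2s)` turns this
into `exp (-k s²)`. For the lower tail the tilt with `1 - 2t = 1 / (1 - 2s)` gives
`exp (k s) (1 - 2s) ^ (k/2)`, and `log (1 - u) ≤ -u - u²/2` does the same; when `s ≥ 1/2` the
event lies in `(-∞, 0]`, which is null.
-/

open MeasureTheory ProbabilityTheory Real Set

/-- The chi-squared distribution with `n` degrees of freedom, as the Gamma
distribution with shape `n/2` and rate `1/2`. -/
noncomputable def chiSqMeasure (n : ℕ) : Measure ℝ :=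
  gammaMeasure (n / 2 : ℝ) (1 / 2 : ℝ)

lemma log_one_sub_le {u : ℝ} (hu0 : 0 ≤ u) (hu1 : u < 1) : log (1 - u) ≤ -u - u ^ 2 / 2 := by
  have hsum := hasSum_pow_div_log_of_abs_lt_one (by rwa [abs_of_nonneg hu0])
  have h := sum_le_hasSum (Finset.range 2) (fun i _ => by positivity) hsum
  norm_num [Finset.sum_range_succ] at h
  linarith

lemma log_one_add_two_mul_add_two_mul_sq_le {s : ℝ} (hs : 0 ≤ s) :
    log (1 + 2 * s + 2 * s ^ 2) ≤ 2 * s := by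
  rw [log_le_iff_le_exp (by positivity)]
  convert quadratic_le_exp_of_nonneg (mul_nonneg zero_le_two hs) using 1
  ring

section Gamma

variable {a r t : ℝ}

lemma measurable_gammaPDF (a r : ℝ) : Measurable (gammaPDF a r) :=
  (measurable_gammaPDFReal a r).ennreal_ofReal

lemma toReal_gammaPDF (ha : 0 < a) (hr : 0 < r) (y : ℝ) :
    (gammaPDF a r y).toReal = gammaPDFReal a r y :=
  ENNReal.toReal_ofReal (gammaPDFReal_nonneg ha hr y)

lemma integrable_gammaPDFReal (ha : 0 < a) (hr : 0 < r) : Integrable (gammaPDFReal a r) := by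
  have h := integrable_toReal_of_lintegral_ne_top (measurable_gammaPDF a r).aemeasurable
    (by simp [lintegral_gammaPDF_eq_one ha hr] : ∫⁻ y, gammaPDF a r y ≠ ⊤)
  simpa only [toReal_gammaPDF ha hr] using h

lemma integral_gammaPDFReal (ha : 0 < a) (hr : 0 < r) : ∫ y, gammaPDFReal a r y = 1 := by
  have h := integral_toReal (μ := volume) (measurable_gammaPDF a r).aemeasurable
    (ae_of_all _ fun _ => ENNReal.ofReal_lt_top)
  simpa [toReal_gammaPDF ha hr, lintegral_gammaPDF_eq_one ha hr] using h

lemma gammaPDFReal_mul_exp (hr : 0 ≤ r) (ht : t < r) (y : ℝ) :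
    gammaPDFReal a r y * exp (t * y) = (r / (r - t)) ^ a * gammaPDFReal a (r - t) y := by
  have hrt : 0 < r - t := sub_pos.mpr ht
  unfold gammaPDFReal
  split_ifs
  · rw [div_rpow hr hrt.le, show -((r - t) * y) = -(r * y) + t * y by ring, exp_add]
    field_simp [(rpow_pos_of_pos hrt a).ne']
  · simp

lemma integrable_exp_mul_gammaMeasure (ha : 0 < a) (hr : 0 < r) (ht : t < r) :
    Integrable (fun y => exp (t * y)) (gammaMeasure a r) := by
  rw [gammaMeasure, integrable_withDensity_iff_integrable_smul' (measurable_gammaPDF a r)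
    (ae_of_all _ fun _ => ENNReal.ofReal_lt_top)]
  simp only [toReal_gammaPDF ha hr, smul_eq_mul, gammaPDFReal_mul_exp hr.le ht]
  exact (integrable_gammaPDFReal ha (sub_pos.mpr ht)).const_mul _

lemma mgf_id_gammaMeasure (ha : 0 < a) (hr : 0 < r) (ht : t < r) :
    mgf id (gammaMeasure a r) t = (r / (r - t)) ^ a := by
  rw [mgf, gammaMeasure, integral_withDensity_eq_integral_toReal_smul (measurable_gammaPDF a r)
    (ae_of_all _ fun _ => ENNReal.ofReal_lt_top)]
  simp only [toReal_gammaPDF ha hr, id, smul_eq_mul, gammaPDFReal_mul_exp hr.le ht]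
  rw [integral_const_mul, integral_gammaPDFReal ha (sub_pos.mpr ht), mul_one]

lemma gammaMeasure_Iic_eq_zero {c : ℝ} (hc : c ≤ 0) : gammaMeasure a r (Iic c) = 0 := by
  refine measure_mono_null (Iic_subset_Iic.mpr hc) ?_
  rw [gammaMeasure, withDensity_apply _ measurableSet_Iic, setLIntegral_congr Iio_ae_eq_Iic.symm]
  exact lintegral_gammaPDF_of_nonpos le_rfl

lemma gammaMeasure_Ici_le (ha : 0 < a) (hr : 0 < r) (ht0 : 0 ≤ t) (ht : t < r) (c : ℝ) :
    gammaMeasure a r (Ici c) ≤ ENNReal.ofReal (exp (-t * c) * (r / (r - t)) ^ a) := by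
  have := isProbabilityMeasure_gammaMeasure ha hr
  rw [← mgf_id_gammaMeasure ha hr ht, ← ENNReal.ofReal_toReal (measure_ne_top _ _)]
  exact ENNReal.ofReal_le_ofReal
    (measure_ge_le_exp_mul_mgf c ht0 (integrable_exp_mul_gammaMeasure ha hr ht))

lemma gammaMeasure_Iic_le (ha : 0 < a) (hr : 0 < r) (ht0 : t ≤ 0) (c : ℝ) :
    gammaMeasure a r (Iic c) ≤ ENNReal.ofReal (exp (-t * c) * (r / (r - t)) ^ a) := by
  have := isProbabilityMeasure_gammaMeasure ha hr
  have ht : t < r := ht0.trans_lt hr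
  rw [← mgf_id_gammaMeasure ha hr ht, ← ENNReal.ofReal_toReal (measure_ne_top _ _)]
  exact ENNReal.ofReal_le_ofReal
    (measure_le_le_exp_mul_mgf c ht0 (integrable_exp_mul_gammaMeasure ha hr ht))

end Gamma

section ChiSquared

variable {k s : ℝ}

lemma gammaMeasure_half_Ici_le (hk : 0 < k) (hs : 0 ≤ s) :
    gammaMeasure (k / 2) (1 / 2) (Ici (k * (1 + 2 * s + 2 * s ^ 2)))
      ≤ ENNReal.ofReal (exp (-(k * s ^ 2))) := by
  set q := 1 + 2 * s + 2 * s ^ 2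
  have hq : 0 < q := by positivity
  set t := (s + s ^ 2) / q with ht_def
  have ht : t < 1 / 2 := by rw [ht_def, div_lt_iff₀ hq]; linarith
  refine (gammaMeasure_Ici_le (by positivity) one_half_pos (by positivity) ht _).trans
    (ENNReal.ofReal_le_ofReal ?_)
  have hmgf : (1 / 2) / (1 / 2 - t) = q := by rw [ht_def]; field_simp; ring
  have htc : -t * (k * q) = -(k * (s + s ^ 2)) := by rw [ht_def]; field_simp
  rw [hmgf, htc, rpow_def_of_pos hq, ← exp_add, exp_le_exp]
  nlinarith [log_one_add_two_mul_add_two_mul_sq_le hs]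

lemma gammaMeasure_half_Iic_le (hk : 0 < k) (hs : 0 ≤ s) :
    gammaMeasure (k / 2) (1 / 2) (Iic (k * (1 - 2 * s)))
      ≤ ENNReal.ofReal (exp (-(k * s ^ 2))) := by
  rcases le_or_gt (1 / 2) s with hs_ge | hs_lt
  · rw [gammaMeasure_Iic_eq_zero (by nlinarith)]
    exact zero_le
  set q := 1 - 2 * s
  have hq : 0 < q := by linarith
  set t := -(s / q) with ht_def
  have ht : t ≤ 0 := by rw [ht_def, neg_nonpos]; positivity
  refine (gammaMeasure_Iic_le (by positivity) one_half_pos ht _).trans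
    (ENNReal.ofReal_le_ofReal ?_)
  have hmgf : (1 / 2) / (1 / 2 - t) = q := by rw [ht_def]; field_simp; ring
  have htc : -t * (k * q) = k * s := by rw [ht_def]; field_simp
  rw [hmgf, htc, rpow_def_of_pos hq, ← exp_add, exp_le_exp]
  nlinarith [log_one_sub_le (u := 2 * s) (by positivity) (by linarith)]

end ChiSquared

theorem chiSq_laurent_massart_general
    {Ω : Type*} [MeasurableSpace Ω] (P : Measure Ω)
    (n : ℕ) (hn : 0 < n) (X : Ω → ℝ) (hX : Measurable X)
    (hdist : Measure.map X P = chiSqMeasure n)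
    (x : ℝ) (hx : 0 < x) :
    P {ω | X ω - n ≥ 2 * Real.sqrt (n * x) + 2 * x} ≤ ENNReal.ofReal (Real.exp (-x))
    ∧ P {ω | X ω - n ≤ -(2 * Real.sqrt (n * x))} ≤ ENNReal.ofReal (Real.exp (-x)) := by
  have hk : (0 : ℝ) < n := Nat.cast_pos.mpr hn
  obtain ⟨s, hs, rfl⟩ : ∃ s ≥ 0, x = n * s ^ 2 :=
    ⟨√(x / n), sqrt_nonneg _, by rw [sq_sqrt (by positivity)]; field_simp⟩
  have hsqrt : √(n * (n * s ^ 2)) = n * s := by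
    rw [← mul_assoc, ← sq, ← mul_pow, sqrt_sq (by positivity)]
  have hP (S : Set ℝ) (hS : MeasurableSet S) :
      P (X ⁻¹' S) = gammaMeasure (n / 2) (1 / 2) S := by
    rw [← Measure.map_apply hX hS, hdist, chiSqMeasure]
  rw [hsqrt]
  constructor
  · have hset : {ω | X ω - n ≥ 2 * (n * s) + 2 * (n * s ^ 2)}
        = X ⁻¹' Ici (n * (1 + 2 * s + 2 * s ^ 2)) := by
      ext ω; simp only [mem_ofPred_eq, mem_preimage, mem_Ici]; constructor <;> intro <;> linarith
    rw [hset, hP _ measurableSet_Ici]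
    exact gammaMeasure_half_Ici_le hk hs
  · have hset : {ω | X ω - n ≤ -(2 * (n * s))} = X ⁻¹' Iic (n * (1 - 2 * s)) := by
      ext ω; simp only [mem_ofPred_eq, mem_preimage, mem_Iic]; constructor <;> intro <;> linarith
    rw [hset, hP _ measurableSet_Iic]
    exact gammaMeasure_half_Iic_le hk hs

/-- **Laurent–Massart chi-squared tail bounds.** If `X ∼ χ²(n)` then for any `x > 0`,
`P(X − n ≥ 2√(nx) + 2x) ≤ exp(−x)` and `P(X − n ≤ −2√(nx)) ≤ exp(−x)`. -/
theorem chiSq_laurent_massart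
    {Ω : Type*} [MeasurableSpace Ω] (P : Measure Ω) [IsProbabilityMeasure P]
    (n : ℕ) (hn : 0 < n) (X : Ω → ℝ) (hX : Measurable X)
    (hdist : Measure.map X P = chiSqMeasure n)
    (x : ℝ) (hx : 0 < x) :
    P {ω | X ω - n ≥ 2 * Real.sqrt (n * x) + 2 * x} ≤ ENNReal.ofReal (Real.exp (-x))
    ∧ P {ω | X ω - n ≤ -(2 * Real.sqrt (n * x))} ≤ ENNReal.ofReal (Real.exp (-x)) :=
  chiSq_laurent_massart_general P n hn X hX hdist x hx
end

section
/- Let Z ∼ Beta(n/2, m/2). For sufficiently large m and n there is a constant c > 0 such that P(Z ≥ (n + c·n^{3/4})/(m + n − c·(m+n)^{3/4})) ≤ exp(−n^{1/2}) + exp(−(m+n)^{1/2}) and P(Z ≤ (n − c·n^{3/4})/(m + n + c·(m+n)^{3/4})) ≤ exp(−n^{1/2}) + exp(−(m+n)^{1/2}). -/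
open MeasureTheory ProbabilityTheory

/-- The Beta distribution on `(0,1)` with parameters `a, b > 0`, with density
`Γ(a+b)/(Γ(a)Γ(b)) · x^(a-1) (1-x)^(b-1)`. -/
noncomputable def betaMeasure (a b : ℝ) : Measure ℝ :=
  volume.withDensity fun x =>
    ENNReal.ofReal (if 0 < x ∧ x < 1 then
      Real.Gamma (a + b) / (Real.Gamma a * Real.Gamma b)
        * x ^ (a - 1) * (1 - x) ^ (b - 1) else 0)

/-!
For `Z ∼ Beta(a, b)` both tails are controlled by a Markov inequality for powers of the odds
`Z / (1 - Z)`: on `{Z ≥ t}` one has `1 ≤ ((1 - t) / t · Z / (1 - Z)) ^ l`, and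
`𝔼[(Z / (1 - Z)) ^ l] = B(a + l, b - l) / B(a, b) ≤ q ^ l` as soon as `a + l ≤ q (b - l)`.
With `a = n / 2`, `b = m / 2`, `l = ⌈n ^ (3/4)⌉` and the thresholds of the theorem, the
resulting ratio is at most `1 - n ^ (-1/4)`, so the tail is at most
`(1 - n ^ (-1/4)) ^ l ≤ exp (-n ^ (1/2))`. The lower tail is the upper tail of `1 - Z ∼ Beta(b, a)`.
-/

open Set

theorem betaMeasure_eq_probabilityTheory_betaMeasure (a b : ℝ) :
    _root_.betaMeasure a b = ProbabilityTheory.betaMeasure a b := by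
  rw [_root_.betaMeasure, ProbabilityTheory.betaMeasure]
  congr with x
  rw [betaPDF_eq, beta, one_div_div]

lemma rpow_natCast_div_eq_pow {x : ℝ} (hx : 0 ≤ x) (k : ℕ) (d : ℝ) :
    x ^ ((k : ℝ) / d) = (x ^ (1 / d)) ^ k := by
  rw [← Real.rpow_mul_natCast hx]
  ring_nf

lemma one_sub_inv_pow_ceil_cube_le_exp {s : ℝ} (hs : 1 ≤ s) :
    (1 - s⁻¹) ^ ⌈s ^ 3⌉₊ ≤ Real.exp (-s ^ 2) := by
  have hs0 : 0 < s := one_pos.trans_le hs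
  calc (1 - s⁻¹) ^ ⌈s ^ 3⌉₊ ≤ Real.exp (-s⁻¹) ^ ⌈s ^ 3⌉₊ :=
        pow_le_pow_left₀ (sub_nonneg.2 (inv_le_one_of_one_le₀ hs)) (Real.one_sub_le_exp_neg _) _
    _ = Real.exp (-(⌈s ^ 3⌉₊ * s⁻¹)) := by rw [← Real.exp_nat_mul, mul_neg]
    _ ≤ Real.exp (-s ^ 2) := by
        gcongr
        calc s ^ 2 = s ^ 3 * s⁻¹ := by field_simp
          _ ≤ ⌈s ^ 3⌉₊ * s⁻¹ := by gcongr; exact Nat.le_ceil _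

namespace ProbabilityTheory

lemma beta_comm (a b : ℝ) : beta a b = beta b a := by
  rw [beta, beta, mul_comm, add_comm]

lemma betaPDF_one_sub (a b x : ℝ) : betaPDF a b (1 - x) = betaPDF b a x := by
  simp only [betaPDF_eq, sub_sub_cancel, beta_comm a b, sub_pos, sub_lt_self_iff, and_comm]
  congr 2
  ring

lemma betaMeasure_preimage_one_sub {a b : ℝ} {s : Set ℝ} (hs : MeasurableSet s) :
    betaMeasure a b ((1 - ·) ⁻¹' s) = betaMeasure b a s := by
  rw [betaMeasure, betaMeasure, withDensity_apply _ (hs.preimage (by fun_prop)),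
    withDensity_apply _ hs, ← lintegral_indicator (hs.preimage (by fun_prop)),
    ← lintegral_indicator hs, ← lintegral_sub_left_eq_self _ 1]
  congr 1
  ext x
  by_cases hx : x ∈ s
  · rw [indicator_of_mem (by simpa using hx), indicator_of_mem hx, betaPDF_one_sub]
  · rw [indicator_of_notMem (by simpa using hx), indicator_of_notMem hx]

lemma betaMeasure_Ici_eq_zero {a b t : ℝ} (ht : 1 ≤ t) : betaMeasure a b (Ici t) = 0 := by
  rw [betaMeasure, withDensity_apply _ measurableSet_Ici]
  exact setLIntegral_eq_zero measurableSet_Ici fun x hx => betaPDF_eq_zero_of_one_le (ht.trans hx)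

lemma beta_add_one_mul {p q : ℝ} (hp : p ≠ 0) (hq : q ≠ 0) :
    beta (p + 1) q * q = beta p (q + 1) * p := by
  simp only [beta, Real.Gamma_add_one hp, Real.Gamma_add_one hq,
    show p + 1 + q = p + (q + 1) by ring]
  ring

lemma beta_add_nat_sub_nat_le {a b q : ℝ} (ha : 0 < a) (hq : 0 ≤ q) :
    ∀ l : ℕ, a + l ≤ q * (b - l) → beta (a + l) (b - l) ≤ q ^ l * beta a b
  | 0, _ => by simp
  | l + 1, h => by
    push_cast at h ⊢
    have hb : 0 < b - l - 1 := by
      have := pos_of_mul_pos_right ((by positivity : (0 : ℝ) < a + (l + 1)).trans_le h) hq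
      linarith
    have ih := beta_add_nat_sub_nat_le ha hq l (by nlinarith)
    have hrec := beta_add_one_mul (p := a + l) (q := b - l - 1) (by positivity) hb.ne'
    rw [show b - l - 1 + 1 = b - l by ring] at hrec
    rw [show a + (l + 1) = a + l + 1 by ring, show b - (l + 1) = b - l - 1 by ring,
      ← mul_le_mul_iff_of_pos_right hb, hrec]
    calc beta (a + l) (b - l) * (a + l) ≤ q ^ l * beta a b * (q * (b - l - 1)) :=
          mul_le_mul ih (by linarith) (by positivity)
            (mul_nonneg (pow_nonneg hq l) (beta_pos ha (by linarith)).le)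
      _ = q ^ (l + 1) * beta a b * (b - l - 1) := by ring

@[fun_prop]
lemma measurable_betaPDF (a b : ℝ) : Measurable (betaPDF a b) :=
  (measurable_betaPDFReal a b).ennreal_ofReal

lemma betaMeasure_Ici_le_odds_pow_mul {a b t : ℝ} {l : ℕ} (ha : 0 < a) (hlb : l < b)
    (ht0 : 0 < t) (ht1 : t < 1) :
    betaMeasure a b (Ici t)
      ≤ ENNReal.ofReal (((1 - t) / t) ^ l * (beta (a + l) (b - l) / beta a b)) := by
  have hb : 0 < b := hlb.trans_le' l.cast_nonneg
  have hB := beta_pos ha hb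
  have hB' := beta_pos (by positivity : 0 < a + l) (sub_pos.2 hlb)
  set K := ((1 - t) / t) ^ l * (beta (a + l) (b - l) / beta a b)
  have hK : 0 ≤ K := by have := sub_pos.2 ht1; positivity
  have hdensity : ∀ x ∈ Ici t, betaPDF a b x ≤ ENNReal.ofReal K * betaPDF (a + l) (b - l) x := by
    intro x (hx : t ≤ x)
    rcases le_or_gt 1 x with hx1 | hx1
    · simp [betaPDF_eq_zero_of_one_le hx1]
    have hx0 : 0 < x := ht0.trans_le hx
    have h1x : 0 < 1 - x := sub_pos.2 hx1
    rw [betaPDF_of_pos_lt_one hx0 hx1, betaPDF_of_pos_lt_one hx0 hx1, ← ENNReal.ofReal_mul hK]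
    apply ENNReal.ofReal_le_ofReal
    have hodds : (1 - x) ^ l ≤ ((1 - t) / t * x) ^ l := by
      refine pow_le_pow_left₀ h1x.le ?_ l
      rw [div_mul_eq_mul_div, le_div_iff₀ ht0]
      nlinarith
    rw [show a + l - 1 = a - 1 + l by ring, Real.rpow_add_natCast hx0.ne',
      show b - 1 = b - l - 1 + l by ring, Real.rpow_add_natCast h1x.ne']
    rw [mul_pow] at hodds
    have := Real.rpow_nonneg hx0.le (a - 1)
    have := Real.rpow_nonneg h1x.le (b - l - 1)
    calc 1 / beta a b * x ^ (a - 1) * ((1 - x) ^ (b - l - 1) * (1 - x) ^ l)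
        ≤ 1 / beta a b * x ^ (a - 1) * ((1 - x) ^ (b - l - 1) * (((1 - t) / t) ^ l * x ^ l)) := by
          gcongr
      _ = K * (1 / beta (a + l) (b - l) * (x ^ (a - 1) * x ^ l) * (1 - x) ^ (b - l - 1)) := by
          simp only [K]
          field_simp
  rw [betaMeasure, withDensity_apply _ measurableSet_Ici]
  calc ∫⁻ x in Ici t, betaPDF a b x
      ≤ ∫⁻ x in Ici t, ENNReal.ofReal K * betaPDF (a + l) (b - l) x :=
        setLIntegral_mono (by fun_prop) hdensity
    _ ≤ ∫⁻ x, ENNReal.ofReal K * betaPDF (a + l) (b - l) x := setLIntegral_le_lintegral _ _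
    _ = ENNReal.ofReal K := by
        rw [lintegral_const_mul _ (measurable_betaPDF _ _),
          lintegral_betaPDF_eq_one (by positivity) (sub_pos.2 hlb), mul_one]

lemma betaMeasure_Ici_le_pow {a b t r : ℝ} {l : ℕ} (ha : 0 < a) (ht0 : 0 < t) (ht1 : t < 1)
    (hr : 0 ≤ r) (h : (1 - t) * (a + l) ≤ r * t * (b - l)) :
    betaMeasure a b (Ici t) ≤ ENNReal.ofReal (r ^ l) := by
  have h1t : 0 < 1 - t := sub_pos.2 ht1
  have hlb : (l : ℝ) < b :=
    sub_pos.1 (pos_of_mul_pos_right ((mul_pos h1t (by positivity)).trans_le h) (by positivity))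
  have hB := beta_pos ha (hlb.trans_le' l.cast_nonneg)
  have hq : a + l ≤ r * t / (1 - t) * (b - l) := by
    rw [div_mul_eq_mul_div, le_div_iff₀ h1t]
    linarith
  refine (betaMeasure_Ici_le_odds_pow_mul ha hlb ht0 ht1).trans (ENNReal.ofReal_le_ofReal ?_)
  calc ((1 - t) / t) ^ l * (beta (a + l) (b - l) / beta a b)
      ≤ ((1 - t) / t) ^ l * (r * t / (1 - t)) ^ l := by
        gcongr
        rw [div_le_iff₀ hB]
        exact beta_add_nat_sub_nat_le ha (by positivity) l hq
    _ = r ^ l := by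
        rw [← mul_pow]
        field_simp

lemma betaMeasure_Iic_le_pow {a b t r : ℝ} {l : ℕ} (hb : 0 < b) (ht0 : 0 < t) (ht1 : t < 1)
    (hr : 0 ≤ r) (h : t * (b + l) ≤ r * (1 - t) * (a - l)) :
    betaMeasure a b (Iic t) ≤ ENNReal.ofReal (r ^ l) := by
  have hIic : Iic t = (1 - ·) ⁻¹' Ici (1 - t) := by
    ext x
    simp
  rw [hIic, betaMeasure_preimage_one_sub measurableSet_Ici]
  exact betaMeasure_Ici_le_pow hb (sub_pos.2 ht1) (by linarith) hr (by rwa [sub_sub_cancel])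

lemma betaMeasure_upper_tail_le_exp {n m s σ : ℝ} (hs : 9 ≤ s) (hσ : 8 < σ) (hn : n = s ^ 4)
    (hmn : m + n = σ ^ 4) :
    betaMeasure (n / 2) (m / 2) (Ici ((n + 8 * s ^ 3) / (m + n - 8 * σ ^ 3)))
      ≤ ENNReal.ofReal (Real.exp (-s ^ 2)) := by
  set l := ⌈s ^ 3⌉₊
  have hl : (l : ℝ) < s ^ 3 + 1 := Nat.ceil_lt_add_one (by positivity)
  have hD : 0 < m + n - 8 * σ ^ 3 := by
    rw [hmn, sub_pos]
    nlinarith [pow_pos (by linarith : (0:ℝ) < σ) 3]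
  have hN : 0 < n + 8 * s ^ 3 := by rw [hn]; positivity
  rcases le_or_gt 1 ((n + 8 * s ^ 3) / (m + n - 8 * σ ^ 3)) with ht1 | ht1
  · rw [betaMeasure_Ici_eq_zero ht1]
    exact zero_le
  have hDN : 0 < m + n - 8 * σ ^ 3 - (n + 8 * s ^ 3) := by
    rw [div_lt_one hD] at ht1
    linarith
  have hr : n + 2 * l ≤ (1 - s⁻¹) * (n + 8 * s ^ 3) := by
    have : (1 - s⁻¹) * (n + 8 * s ^ 3) = s ^ 4 + 7 * s ^ 3 - 8 * s ^ 2 := by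
      rw [hn]; field_simp; ring
    rw [this, hn]
    nlinarith [pow_pos (by linarith : (0:ℝ) < s) 2]
  have hm : m + n - 8 * σ ^ 3 - (n + 8 * s ^ 3) ≤ m - 2 * l := by
    have : 1 ≤ s ^ 3 := one_le_pow₀ (by linarith)
    linarith [pow_pos (by linarith : (0:ℝ) < σ) 3]
  refine (betaMeasure_Ici_le_pow (r := 1 - s⁻¹) (l := l) (by rw [hn]; positivity)
    (div_pos hN hD) ht1 (sub_nonneg.2 (inv_le_one_of_one_le₀ (by linarith))) ?_).trans
    (ENNReal.ofReal_le_ofReal (one_sub_inv_pow_ceil_cube_le_exp (by linarith)))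
  set D := m + n - 8 * σ ^ 3
  set N := n + 8 * s ^ 3
  calc (1 - N / D) * (n / 2 + l) = (D - N) * (n + 2 * l) / (2 * D) := by field_simp
    _ ≤ (m - 2 * l) * ((1 - s⁻¹) * N) / (2 * D) := by
        gcongr
        · rw [hn]; positivity
        · linarith
    _ = (1 - s⁻¹) * (N / D) * (m / 2 - l) := by field_simp

lemma betaMeasure_lower_tail_le_exp {n m s σ : ℝ} (hs : 9 ≤ s) (hσ : 0 ≤ σ) (hm : 0 < m)
    (hn : n = s ^ 4) :
    betaMeasure (n / 2) (m / 2) (Iic ((n - 8 * s ^ 3) / (m + n + 8 * σ ^ 3)))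
      ≤ ENNReal.ofReal (Real.exp (-s ^ 2)) := by
  set l := ⌈s ^ 3⌉₊
  have hl : (l : ℝ) < s ^ 3 + 1 := Nat.ceil_lt_add_one (by positivity)
  have hs3 : 1 ≤ s ^ 3 := one_le_pow₀ (by linarith)
  have hσ3 : 0 ≤ σ ^ 3 := by positivity
  set D := m + n + 8 * σ ^ 3
  set N := n - 8 * s ^ 3
  have hN : 0 < N := by
    simp only [N, hn]
    nlinarith
  have hD : 0 < D := by linarith
  have hND : N < D := by linarith
  have hr : N ≤ (1 - s⁻¹) * (n - 2 * l) := by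
    have : (1 - s⁻¹) * (n - 2 * l) = (s - 1) * (n - 2 * l) / s := by field_simp
    rw [this, le_div_iff₀ (by linarith)]
    simp only [N, hn]
    nlinarith [mul_le_mul_of_nonneg_left hl.le (by linarith : (0:ℝ) ≤ s - 1)]
  have hm2 : m + 2 * l ≤ D - N := by linarith
  refine (betaMeasure_Iic_le_pow (r := 1 - s⁻¹) (l := l) (by positivity) (div_pos hN hD)
    ((div_lt_one hD).2 hND) (sub_nonneg.2 (inv_le_one_of_one_le₀ (by linarith))) ?_).trans
    (ENNReal.ofReal_le_ofReal (one_sub_inv_pow_ceil_cube_le_exp (by linarith)))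
  calc N / D * (m / 2 + l) = N * (m + 2 * l) / (2 * D) := by field_simp
    _ ≤ (1 - s⁻¹) * (n - 2 * l) * (D - N) / (2 * D) := by
        gcongr
        linarith
    _ = (1 - s⁻¹) * (1 - N / D) * (n / 2 - l) := by field_simp

end ProbabilityTheory

/-- **Beta tail bounds.** There is a constant `c > 0` such that for all sufficiently
large `m` and `n`, if `Z ∼ Beta(n/2, m/2)` then
`P(Z ≥ (n + c n^{3/4})/(m + n − c (m+n)^{3/4})) ≤ exp(−n^{1/2}) + exp(−(m+n)^{1/2})`
and
`P(Z ≤ (n − c n^{3/4})/(m + n + c (m+n)^{3/4})) ≤ exp(−n^{1/2}) + exp(−(m+n)^{1/2})`. -/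
theorem beta_tail_bounds :
    ∃ c > (0 : ℝ), ∃ N : ℕ, ∀ m ≥ N, ∀ n ≥ N,
      ∀ (Ω : Type) (_ : MeasurableSpace Ω) (P : Measure Ω), IsProbabilityMeasure P →
        ∀ Z : Ω → ℝ, Measurable Z →
          Measure.map Z P = _root_.betaMeasure ((n : ℝ) / 2) ((m : ℝ) / 2) →
          P {ω | Z ω ≥ ((n : ℝ) + c * (n : ℝ) ^ ((3 : ℝ) / 4))
                  / ((m : ℝ) + n - c * ((m : ℝ) + n) ^ ((3 : ℝ) / 4))}
              ≤ ENNReal.ofReal (Real.exp (-(n : ℝ) ^ ((1 : ℝ) / 2))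
                  + Real.exp (-((m : ℝ) + n) ^ ((1 : ℝ) / 2)))
          ∧ P {ω | Z ω ≤ ((n : ℝ) - c * (n : ℝ) ^ ((3 : ℝ) / 4))
                  / ((m : ℝ) + n + c * ((m : ℝ) + n) ^ ((3 : ℝ) / 4))}
              ≤ ENNReal.ofReal (Real.exp (-(n : ℝ) ^ ((1 : ℝ) / 2))
                  + Real.exp (-((m : ℝ) + n) ^ ((1 : ℝ) / 2))) := by
  refine ⟨8, by norm_num, 9 ^ 4, fun m hm n hn Ω _ P _ Z hZ hmap => ?_⟩
  have hn0 : (0 : ℝ) ≤ n := n.cast_nonneg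
  have hmn0 : (0 : ℝ) ≤ m + n := by positivity
  set s := (n : ℝ) ^ ((1 : ℝ) / 4)
  set σ := ((m : ℝ) + n) ^ ((1 : ℝ) / 4)
  have hs4 : s ^ 4 = n := by rw [← rpow_natCast_div_eq_pow hn0]; norm_num
  have hσ4 : σ ^ 4 = m + n := by rw [← rpow_natCast_div_eq_pow hmn0]; norm_num
  have hs : 9 ≤ s := by
    refine le_of_pow_le_pow_left₀ four_ne_zero (by positivity) ?_
    rw [hs4]
    exact_mod_cast hn
  have hsσ : s ≤ σ := Real.rpow_le_rpow hn0 (by linarith) (by norm_num)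
  rw [show (n : ℝ) ^ ((3 : ℝ) / 4) = s ^ 3 by rw [← rpow_natCast_div_eq_pow hn0]; norm_num,
    show ((m : ℝ) + n) ^ ((3 : ℝ) / 4) = σ ^ 3 by rw [← rpow_natCast_div_eq_pow hmn0]; norm_num,
    show (n : ℝ) ^ ((1 : ℝ) / 2) = s ^ 2 by rw [← rpow_natCast_div_eq_pow hn0]; norm_num]
  have hlaw : ∀ S, MeasurableSet S →
      P (Z ⁻¹' S) = ProbabilityTheory.betaMeasure (n / 2) (m / 2) S := fun S hS => by
    rw [← Measure.map_apply hZ hS, hmap, betaMeasure_eq_probabilityTheory_betaMeasure]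
  have hexp : ENNReal.ofReal (Real.exp (-s ^ 2))
      ≤ ENNReal.ofReal (Real.exp (-s ^ 2) + Real.exp (-((m : ℝ) + n) ^ ((1 : ℝ) / 2))) :=
    ENNReal.ofReal_le_ofReal (le_add_of_nonneg_right (Real.exp_pos _).le)
  constructor
  · exact (hlaw _ measurableSet_Ici).trans_le
      ((betaMeasure_upper_tail_le_exp hs (by linarith) hs4.symm hσ4.symm).trans hexp)
  · exact (hlaw _ measurableSet_Iic).trans_le
      ((betaMeasure_lower_tail_le_exp hs (by linarith) (Nat.cast_pos.2 (by omega)) hs4.symm).trans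
        hexp)
end

section
/- Let X ∈ ℝ^{n×p} with columns X₁,…,X_p, let S ⊂ {1,…,p} with |S| = s ≥ 1, and suppose X(S)ᵀX(S) is invertible. Assume the columns are normalized (‖X_j‖₂ = 1 for all j) and that the pairwise inner products satisfy max_{j≠k} |X_jᵀX_k| ≤ c/(2s−1) for some constant 0 ≤ c < 1. Then X satisfies the irrepresentable condition: ‖X(S^c)ᵀX(S)(X(S)ᵀX(S))⁻¹ sign(β*(S))‖_∞ ≤ 1 − η for some η ∈ (0,1], for any sign vector sign(β*(S)) ∈ {−1,+1}^s. -/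
/-!
Write `G = X(S)ᵀX(S)` and `v = G⁻¹ b`. The Gram matrix `G` has unit diagonal and off-diagonal
entries bounded by `θ = c/(2s-1)`, so it is diagonally dominant: `(1 - (s-1)θ) ‖v‖∞ ≤ ‖b‖∞ = 1`.
Each entry of `X(Sᶜ)ᵀX(S)` is also bounded by `θ`, so every coordinate of `X(Sᶜ)ᵀX(S) v` is at most
`sθ‖v‖∞ ≤ sθ / (1 - (s-1)θ)`, and this equals `sc / (2s - 1 - (s-1)c) ≤ c`.
-/

open Matrix

lemma abs_sum_mul_le_card_mul_norm {ι : Type*} [Fintype ι] (t : Finset ι) (a v : ι → ℝ)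
    {θ : ℝ} (ha : ∀ j ∈ t, |a j| ≤ θ) :
    |∑ j ∈ t, a j * v j| ≤ t.card * θ * ‖v‖ := by
  calc |∑ j ∈ t, a j * v j| ≤ ∑ j ∈ t, |a j| * |v j| := by
        simpa only [abs_mul] using Finset.abs_sum_le_sum_abs (fun j => a j * v j) t
    _ ≤ ∑ _j ∈ t, θ * ‖v‖ := by
        refine Finset.sum_le_sum fun j hj => ?_
        exact mul_le_mul (ha j hj) (norm_le_pi_norm v j) (abs_nonneg _)
          ((abs_nonneg _).trans (ha j hj))
    _ = t.card * θ * ‖v‖ := by rw [Finset.sum_const, nsmul_eq_mul, mul_assoc]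

lemma Matrix.one_sub_card_mul_norm_le_norm_mulVec {ι : Type*} [Fintype ι] [DecidableEq ι]
    (A : Matrix ι ι ℝ) {θ : ℝ} (hdiag : ∀ i, A i i = 1)
    (hoff : ∀ i j, i ≠ j → |A i j| ≤ θ) (v : ι → ℝ) :
    (1 - (Fintype.card ι - 1) * θ) * ‖v‖ ≤ ‖A *ᵥ v‖ := by
  rcases isEmpty_or_nonempty ι with hι | hι
  · simp [Subsingleton.elim v 0]
  suffices ‖v‖ ≤ ‖A *ᵥ v‖ + (Fintype.card ι - 1) * θ * ‖v‖ by linarith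
  refine (pi_norm_le_iff_of_nonempty _).mpr fun i => ?_
  have hsplit : (A *ᵥ v) i = v i + ∑ j ∈ Finset.univ.erase i, A i j * v j := by
    rw [mulVec, dotProduct, ← Finset.add_sum_erase _ _ (Finset.mem_univ i), hdiag, one_mul]
  have hrest := abs_sum_mul_le_card_mul_norm (Finset.univ.erase i) (A i) v
    fun j hj => hoff i j (Finset.ne_of_mem_erase hj).symm
  rw [Finset.card_erase_of_mem (Finset.mem_univ i), Finset.card_univ,
    Nat.cast_sub Fintype.card_pos, Nat.cast_one] at hrest
  calc ‖v i‖ = |(A *ᵥ v) i - ∑ j ∈ Finset.univ.erase i, A i j * v j| := by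
        rw [hsplit, add_sub_cancel_right, Real.norm_eq_abs]
    _ ≤ |(A *ᵥ v) i| + |∑ j ∈ Finset.univ.erase i, A i j * v j| := abs_sub _ _
    _ ≤ ‖A *ᵥ v‖ + (Fintype.card ι - 1) * θ * ‖v‖ :=
        add_le_add (norm_le_pi_norm (A *ᵥ v) i) hrest

lemma mul_div_two_mul_sub_one_le {s c : ℝ} (hs : 1 ≤ s) (hc0 : 0 ≤ c) (hc1 : c ≤ 1) :
    s * (c / (2 * s - 1)) ≤ c * (1 - (s - 1) * (c / (2 * s - 1))) := by
  have h2s : 0 < 2 * s - 1 := by linarith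
  rw [← sub_nonneg]
  have hdiff : c * (1 - (s - 1) * (c / (2 * s - 1))) - s * (c / (2 * s - 1)) =
      c * (s - 1) * (1 - c) / (2 * s - 1) := by
    simp only [div_eq_mul_inv]
    linear_combination (-c) * mul_inv_cancel₀ h2s.ne'
  rw [hdiff]
  have : 0 ≤ s - 1 := by linarith
  have : 0 ≤ 1 - c := by linarith
  positivity

/-- **Zhao–Yu sufficient condition (Corollary 2) for the irrepresentable condition.**
If the columns of `X` are normalized (`‖X_j‖₂ = 1`) and the pairwise inner products
satisfy `max_{j≠k} |X_jᵀX_k| ≤ c/(2s−1)` with `0 ≤ c < 1`, where `s = |S| ≥ 1` and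
`X(S)ᵀX(S)` is invertible, then the irrepresentable condition holds: there is
`η ∈ (0,1]` such that for every sign vector `b ∈ {−1,+1}^S`,
`‖X(Sᶜ)ᵀ X(S) (X(S)ᵀX(S))⁻¹ b‖_∞ ≤ 1 − η`. -/
theorem zhao_yu_irrepresentable
    (n p : ℕ) (X : Matrix (Fin n) (Fin p) ℝ)
    (S : Finset (Fin p)) (s : ℕ) (hs : S.card = s) (hs1 : 1 ≤ s)
    (XS : Matrix (Fin n) {j // j ∈ S} ℝ) (hXS : XS = Matrix.of fun i j => X i j.1)
    (XSc : Matrix (Fin n) {j // j ∉ S} ℝ) (hXSc : XSc = Matrix.of fun i j => X i j.1)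
    (hinv : IsUnit (XSᵀ * XS).det)
    (hnorm : ∀ j : Fin p, ∑ i, (X i j) ^ 2 = 1)
    (c : ℝ) (hc0 : 0 ≤ c) (hc1 : c < 1)
    (hpair : ∀ j k : Fin p, j ≠ k →
      |∑ i, X i j * X i k| ≤ c / (2 * (s : ℝ) - 1)) :
    ∃ η : ℝ, 0 < η ∧ η ≤ 1 ∧
      ∀ b : {j // j ∈ S} → ℝ, (∀ j, b j = 1 ∨ b j = -1) →
        ∀ k : {j // j ∉ S},
          |(XScᵀ * XS * (XSᵀ * XS)⁻¹).mulVec b k| ≤ 1 - η := by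
  refine ⟨1 - c, by linarith, by linarith, fun b hb k => ?_⟩
  rw [sub_sub_cancel]
  set θ := c / (2 * (s : ℝ) - 1)
  set v := (XSᵀ * XS)⁻¹ *ᵥ b
  have hcard : (Fintype.card {j // j ∈ S} : ℝ) = s := by rw [Fintype.card_coe, hs]
  have hGv : (XSᵀ * XS) *ᵥ v = b := by
    rw [mulVec_mulVec, mul_nonsing_inv _ hinv, one_mulVec]
  have hb1 : ‖b‖ ≤ 1 := (pi_norm_le_iff_of_nonneg zero_le_one).mpr fun j => by
    rcases hb j with h | h <;> simp [h]
  have hdiag : ∀ j, (XSᵀ * XS) j j = 1 := fun j => by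
    simpa [hXS, mul_apply, sq] using hnorm j
  have hoff : ∀ j k, j ≠ k → |(XSᵀ * XS) j k| ≤ θ := fun j k hjk => by
    simpa [hXS, mul_apply] using hpair j k (Subtype.coe_ne_coe.mpr hjk)
  have hcross : ∀ j, |(XScᵀ * XS) k j| ≤ θ := fun j => by
    simpa [hXS, hXSc, mul_apply] using hpair k j fun h => k.2 (h ▸ j.2)
  have hv : (1 - ((s : ℝ) - 1) * θ) * ‖v‖ ≤ 1 := by
    have := (XSᵀ * XS).one_sub_card_mul_norm_le_norm_mulVec hdiag hoff v
    rw [hcard, hGv] at this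
    exact this.trans hb1
  have hk : |((XScᵀ * XS) *ᵥ v) k| ≤ s * θ * ‖v‖ := by
    have := abs_sum_mul_le_card_mul_norm Finset.univ _ v fun j _ => hcross j
    rwa [Finset.card_univ, hcard] at this
  calc |((XScᵀ * XS * (XSᵀ * XS)⁻¹) *ᵥ b) k| = |((XScᵀ * XS) *ᵥ v) k| := by
        rw [← mulVec_mulVec]
    _ ≤ s * θ * ‖v‖ := hk
    _ ≤ c * (1 - ((s : ℝ) - 1) * θ) * ‖v‖ := by
        refine mul_le_mul_of_nonneg_right ?_ (norm_nonneg v)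
        exact mul_div_two_mul_sub_one_le (by exact_mod_cast hs1) hc0 hc1.le
    _ ≤ c := by
        rw [mul_assoc]
        exact mul_le_of_le_one_right hc0 hv
end

section
/- Consider the linear model Y = Xβ* + ε with ε ∼ N(0, σ²I_n), n ≥ p, rank(X) = p, and Λ_min((1/n)XᵀX) ≥ C̃_min > 0. Let F = U D⁻¹Uᵀ be the Puffer transformation (X = UDVᵀ its SVD), X̃ = FX, Ỹ = FY, and β̃(λ) = argmin_b (1/2)‖Ỹ − X̃b‖₂² + λ‖b‖₁. If min_{j∈S}|β*_j| ≥ 2λ (S the support of β*), then with probability at least 1 − 2p·exp(−nλ²C̃_min/(2σ²)), sign(β̃(λ)) = sign(β*). -/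
/-!
With `X = U D Vᵀ`, the Puffer transform gives `F X = U Vᵀ`, whose columns are orthonormal. The
preconditioned Lasso objective then splits into `p` scalar problems
`½ t² - z_j t + λ |t|` with `z = (F X)ᵀ F Y = β* + M ε`, `M = V D⁻¹ Uᵀ`, and each scalar minimizer
has the sign of `β*_j` as soon as `|(M ε)_j| < λ` and `|β*_j| ≥ 2λ` on the support. The row `M_j`
has squared norm `∑_k V_jk² / d_k² ≤ 1 / (n C̃_min)`, because `d_k² ≥ n C̃_min` by the eigenvalue
bound. So `(M ε)_j` is a centered Gaussian with variance at most `σ² / (n C̃_min)`, and a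
sub-Gaussian Chernoff bound on both tails plus a union bound over `j` gives the probability.
-/

open Matrix MeasureTheory ProbabilityTheory

/-- A random vector is (jointly) Gaussian with mean `m` and covariance matrix `C` if
every linear functional of it is a real Gaussian with corresponding mean and variance. -/
def IsGaussianVector {Ω : Type*} [MeasurableSpace Ω] (P : Measure Ω) {n : ℕ}
    (X : Ω → Fin n → ℝ) (m : Fin n → ℝ) (C : Matrix (Fin n) (Fin n) ℝ) : Prop :=
  ∀ a : Fin n → ℝ,
    Measure.map (fun ω => ∑ i, a i * X ω i) P
      = gaussianReal (∑ i, a i * m i) (Real.toNNReal (a ⬝ᵥ C.mulVec a))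

open scoped NNReal

namespace ProbabilityTheory

variable {Ω : Type*} [MeasurableSpace Ω] {μ : Measure Ω} {X : Ω → ℝ}

lemma hasSubgaussianMGF_of_map_eq_gaussianReal {v : ℝ≥0} (hX : μ.map X = gaussianReal 0 v) :
    HasSubgaussianMGF X v μ := by
  have hXm : AEMeasurable X μ := aemeasurable_of_map_neZero (by rw [hX]; infer_instance)
  rw [← HasSubgaussianMGF.id_map_iff hXm, hX]
  exact ⟨integrable_exp_mul_gaussianReal, fun t => by simp [mgf_id_gaussianReal]⟩

lemma HasSubgaussianMGF.mono {c c' : ℝ≥0} (h : HasSubgaussianMGF X c μ) (hc : c ≤ c') :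
    HasSubgaussianMGF X c' μ :=
  ⟨h.integrable_exp_mul, fun t => (h.mgf_le t).trans (Real.exp_le_exp.mpr (by gcongr))⟩

lemma HasSubgaussianMGF.measureReal_abs_ge_le {c : ℝ≥0} (h : HasSubgaussianMGF X c μ) {ε : ℝ}
    (hε : 0 ≤ ε) : μ.real {ω | ε ≤ |X ω|} ≤ 2 * Real.exp (-ε ^ 2 / (2 * c)) := by
  have hsplit : {ω | ε ≤ |X ω|} = {ω | ε ≤ X ω} ∪ {ω | ε ≤ (-X) ω} := by
    ext; simp [le_abs]
  rw [hsplit]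
  linarith [measureReal_union_le (μ := μ) {ω | ε ≤ X ω} {ω | ε ≤ (-X) ω},
    h.measure_ge_le hε, h.neg.measure_ge_le hε]

end ProbabilityTheory

section GaussianVector

variable {Ω : Type*} [MeasurableSpace Ω] {μ : Measure Ω} {n : ℕ} {ε : Ω → Fin n → ℝ} {σ : ℝ}

lemma IsGaussianVector.hasSubgaussianMGF_dotProduct
    (hε : IsGaussianVector μ ε 0 (σ ^ 2 • 1)) (a : Fin n → ℝ) :
    HasSubgaussianMGF (fun ω => a ⬝ᵥ ε ω) (Real.toNNReal (σ ^ 2 * (a ⬝ᵥ a))) μ := by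
  apply hasSubgaussianMGF_of_map_eq_gaussianReal
  have h := hε a
  rw [smul_mulVec, one_mulVec, dotProduct_smul, smul_eq_mul] at h
  simp only [Pi.zero_apply, mul_zero, Finset.sum_const_zero] at h
  exact h

lemma IsGaussianVector.measureReal_abs_dotProduct_ge_le
    (hε : IsGaussianVector μ ε 0 (σ ^ 2 • 1)) {c : ℝ} (hc : 0 < c) {a : Fin n → ℝ}
    (ha : c * (a ⬝ᵥ a) ≤ 1) {t : ℝ} (ht : 0 ≤ t) :
    μ.real {ω | t ≤ |a ⬝ᵥ ε ω|} ≤ 2 * Real.exp (-(c * t ^ 2) / (2 * σ ^ 2)) := by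
  have hvar : σ ^ 2 * (a ⬝ᵥ a) ≤ σ ^ 2 / c := by
    rw [le_div_iff₀ hc]
    nlinarith [sq_nonneg σ]
  have h := ((hε.hasSubgaussianMGF_dotProduct a).mono
    (Real.toNNReal_le_toNNReal hvar)).measureReal_abs_ge_le ht
  have hexp : -t ^ 2 / (2 * (σ ^ 2 / c)) = -(c * t ^ 2) / (2 * σ ^ 2) := by
    rw [mul_div_assoc', div_div_eq_mul_div]; ring
  rwa [Real.coe_toNNReal _ (by positivity), hexp] at h

end GaussianVector

lemma MeasureTheory.ofReal_one_sub_le_measure_iInter_compl {Ω ι : Type*} [MeasurableSpace Ω]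
    {μ : Measure Ω} [IsProbabilityMeasure μ] [Fintype ι] (s : ι → Set Ω) {q : ℝ}
    (hs : ∀ i, μ.real (s i) ≤ q) :
    ENNReal.ofReal (1 - Fintype.card ι * q) ≤ μ (⋂ i, (s i)ᶜ) := by
  apply ENNReal.ofReal_le_of_le_toReal
  have hcover : 1 ≤ μ.real (⋂ i, (s i)ᶜ) + μ.real (⋃ i, s i) := by
    rw [← Set.compl_iUnion, ← probReal_univ (μ := μ), ← Set.compl_union_self (⋃ i, s i)]
    exact measureReal_union_le _ _
  have hunion : μ.real (⋃ i, s i) ≤ Fintype.card ι * q := by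
    calc μ.real (⋃ i, s i) ≤ ∑ i, μ.real (s i) := measureReal_iUnion_fintype_le s
      _ ≤ ∑ _i : ι, q := Finset.sum_le_sum fun i _ => hs i
      _ = Fintype.card ι * q := by simp
  change _ ≤ μ.real _
  linarith

namespace Matrix

variable {l m n : Type*} [Fintype m] [Fintype n] [DecidableEq n]

lemma inv_diagonal_of_ne_zero {K : Type*} [Field K] {d : n → K} (hd : ∀ i, d i ≠ 0) :
    (diagonal d)⁻¹ = diagonal d⁻¹ :=
  inv_eq_right_inv (by simp [diagonal_mul_diagonal, hd])

lemma mul_transpose_self_apply {R : Type*} [CommSemiring R] (A : Matrix l m R) (i : l) :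
    (A * Aᵀ) i i = A i ⬝ᵥ A i :=
  mul_apply'

variable {U : Matrix m n ℝ} {d : n → ℝ} {V : Matrix n n ℝ}

lemma dotProduct_self_mul_transpose_row (hU : Uᵀ * U = 1) (B : Matrix l n ℝ) (i : l) :
    (B * Uᵀ) i ⬝ᵥ (B * Uᵀ) i = B i ⬝ᵥ B i := by
  rw [← mul_transpose_self_apply, ← mul_transpose_self_apply, transpose_mul, transpose_transpose,
    Matrix.mul_assoc, ← Matrix.mul_assoc Uᵀ, hU, Matrix.one_mul]

lemma mulVec_dotProduct_mulVec_of_orthonormal (hV : Vᵀ * V = 1) (x y : n → ℝ) :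
    V *ᵥ x ⬝ᵥ V *ᵥ y = x ⬝ᵥ y := by
  rw [dotProduct_mulVec, ← mulVec_transpose, mulVec_mulVec, hV, one_mulVec]

lemma puffer_mul_svd (hd : ∀ i, d i ≠ 0) (hU : Uᵀ * U = 1) :
    U * (diagonal d)⁻¹ * Uᵀ * (U * diagonal d * Vᵀ) = U * Vᵀ := by
  rw [inv_diagonal_of_ne_zero hd]
  simp only [Matrix.mul_assoc]
  rw [← Matrix.mul_assoc Uᵀ, hU, Matrix.one_mul, ← Matrix.mul_assoc (diagonal _),
    diagonal_mul_diagonal]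
  simp [hd]

lemma transpose_mul_self_of_orthonormal (hU : Uᵀ * U = 1) (hV : V * Vᵀ = 1) :
    (U * Vᵀ)ᵀ * (U * Vᵀ) = 1 := by
  rw [transpose_mul, transpose_transpose, Matrix.mul_assoc, ← Matrix.mul_assoc Uᵀ, hU,
    Matrix.one_mul, hV]

lemma transpose_mul_puffer (hd : ∀ i, d i ≠ 0) (hU : Uᵀ * U = 1) :
    (U * Vᵀ)ᵀ * (U * (diagonal d)⁻¹ * Uᵀ) = V * diagonal d⁻¹ * Uᵀ := by
  rw [inv_diagonal_of_ne_zero hd, transpose_mul, transpose_transpose]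
  simp only [Matrix.mul_assoc]
  rw [← Matrix.mul_assoc Uᵀ, hU, Matrix.one_mul]

lemma le_sq_of_forall_le_quadForm_svd (hU : Uᵀ * U = 1) (hV : Vᵀ * V = 1) {c : ℝ}
    (heig : ∀ v : n → ℝ, c * (∑ j, v j ^ 2) ≤
      v ⬝ᵥ ((U * diagonal d * Vᵀ)ᵀ * (U * diagonal d * Vᵀ)) *ᵥ v)
    (k : n) : c ≤ d k ^ 2 := by
  have hgram : (U * diagonal d * Vᵀ)ᵀ * (U * diagonal d * Vᵀ) = V * diagonal (d * d) * Vᵀ := by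
    rw [transpose_mul, transpose_mul, transpose_transpose, diagonal_transpose]
    simp only [Matrix.mul_assoc]
    rw [← Matrix.mul_assoc Uᵀ, hU, Matrix.one_mul, ← Matrix.mul_assoc (diagonal d),
      diagonal_mul_diagonal]
    rfl
  have h := heig (V *ᵥ Pi.single k 1)
  rw [hgram, ← mulVec_mulVec, ← mulVec_mulVec, mulVec_mulVec (M := Vᵀ), hV,
    one_mulVec, mulVec_dotProduct_mulVec_of_orthonormal hV] at h
  have hnorm : ∑ j, (V *ᵥ Pi.single k 1) j ^ 2 = 1 := by
    simp only [sq, ← dotProduct.eq_1, mulVec_dotProduct_mulVec_of_orthonormal hV]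
    simp
  rw [hnorm, mul_one] at h
  simpa [mulVec_diagonal, sq] using h

lemma mul_dotProduct_self_row_le_one (hU : Uᵀ * U = 1) (hV : V * Vᵀ = 1) {c : ℝ}
    (hd : ∀ k, c ≤ d k ^ 2) (j : n) :
    c * ((V * diagonal d⁻¹ * Uᵀ) j ⬝ᵥ (V * diagonal d⁻¹ * Uᵀ) j) ≤ 1 := by
  have hrow : ∑ k, V j k ^ 2 = 1 := by
    have h := mul_transpose_self_apply V j
    rw [hV, one_apply_eq] at h
    simpa [dotProduct, sq] using h.symm
  rw [dotProduct_self_mul_transpose_row hU, ← hrow, dotProduct, Finset.mul_sum]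
  refine Finset.sum_le_sum fun k _ => ?_
  have hk : c * (d k)⁻¹ ^ 2 ≤ 1 := by
    rw [inv_pow, ← div_eq_mul_inv]
    exact div_le_one_of_le₀ (hd k) (sq_nonneg _)
  calc c * ((V * diagonal d⁻¹) j k * (V * diagonal d⁻¹) j k)
      = V j k ^ 2 * (c * (d k)⁻¹ ^ 2) := by simp only [mul_diagonal, Pi.inv_apply]; ring
    _ ≤ V j k ^ 2 := mul_le_of_le_one_right (sq_nonneg _) hk

end Matrix

noncomputable def scalarLasso (z lam t : ℝ) : ℝ := 1 / 2 * t ^ 2 - z * t + lam * |t|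

section ScalarLasso

variable {z lam u : ℝ}

lemma pos_of_isMin_scalarLasso (hu : ∀ t, scalarLasso z lam u ≤ scalarLasso z lam t)
    (hlam : 0 ≤ lam) (hz : lam < z) : 0 < u := by
  by_contra! hu0
  have h := hu (z - lam)
  simp only [scalarLasso, abs_of_nonpos hu0, abs_of_pos (sub_pos.mpr hz)] at h
  nlinarith [mul_nonneg (by linarith : 0 ≤ z + lam) (neg_nonneg.mpr hu0)]

lemma neg_of_isMin_scalarLasso (hu : ∀ t, scalarLasso z lam u ≤ scalarLasso z lam t)
    (hlam : 0 ≤ lam) (hz : z < -lam) : u < 0 := by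
  have hu' : ∀ t, scalarLasso (-z) lam (-u) ≤ scalarLasso (-z) lam t := fun t => by
    simpa [scalarLasso] using hu (-t)
  simpa using pos_of_isMin_scalarLasso hu' hlam (by linarith)

lemma eq_zero_of_isMin_scalarLasso (hu : ∀ t, scalarLasso z lam u ≤ scalarLasso z lam t)
    (hz : |z| < lam) : u = 0 := by
  by_contra hu0
  have h := hu 0
  have hzu : z * u ≤ |z| * |u| := by rw [← abs_mul]; exact le_abs_self _
  have hgap : 0 < (lam - |z|) * |u| := mul_pos (by linarith) (abs_pos.mpr hu0)
  simp only [scalarLasso] at h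
  nlinarith [sq_nonneg u]

lemma sign_eq_of_isMin_scalarLasso (hu : ∀ t, scalarLasso z lam u ≤ scalarLasso z lam t)
    {b : ℝ} (hzb : |z - b| < lam) (hb : b ≠ 0 → 2 * lam ≤ |b|) :
    Real.sign u = Real.sign b := by
  have hlam : 0 ≤ lam := (abs_nonneg _).trans hzb.le
  have hzb' := abs_lt.mp hzb
  rcases lt_trichotomy b 0 with hneg | rfl | hpos
  · have := hb hneg.ne
    rw [abs_of_neg hneg] at this
    rw [Real.sign_of_neg hneg, Real.sign_of_neg (neg_of_isMin_scalarLasso hu hlam (by linarith))]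
  · rw [eq_zero_of_isMin_scalarLasso hu (by simpa using hzb)]
  · have := hb hpos.ne'
    rw [abs_of_pos hpos] at this
    rw [Real.sign_of_pos hpos, Real.sign_of_pos (pos_of_isMin_scalarLasso hu hlam (by linarith))]

end ScalarLasso

lemma apply_le_of_forall_sum_le {ι : Type*} [Fintype ι] [DecidableEq ι] {f : ι → ℝ → ℝ} {u : ι → ℝ}
    (hu : ∀ b : ι → ℝ, ∑ k, f k (u k) ≤ ∑ k, f k (b k)) (j : ι) (t : ℝ) :
    f j (u j) ≤ f j t := by
  have h := hu (Function.update u j t)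
  have hrest : ∑ k ∈ Finset.univ.erase j, f k (Function.update u j t k)
      = ∑ k ∈ Finset.univ.erase j, f k (u k) :=
    Finset.sum_congr rfl fun k hk => by rw [Function.update_of_ne (Finset.ne_of_mem_erase hk)]
  rw [← Finset.add_sum_erase _ _ (Finset.mem_univ j),
    ← Finset.add_sum_erase _ _ (Finset.mem_univ j), hrest, Function.update_self] at h
  linarith

section Lasso

variable {m p : Type*} [Fintype m] [Fintype p]

noncomputable def lassoObjective (A : Matrix m p ℝ) (y : m → ℝ) (lam : ℝ) (b : p → ℝ) : ℝ :=
  1 / 2 * (∑ i, (y i - (A *ᵥ b) i) ^ 2) + lam * ∑ j, |b j|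

variable [DecidableEq p]

lemma lassoObjective_eq_of_orthonormal {A : Matrix m p ℝ} (hA : Aᵀ * A = 1) (y : m → ℝ)
    (lam : ℝ) (b : p → ℝ) :
    lassoObjective A y lam b = 1 / 2 * (y ⬝ᵥ y) + ∑ j, scalarLasso ((Aᵀ *ᵥ y) j) lam (b j) := by
  have hcross : y ⬝ᵥ A *ᵥ b = Aᵀ *ᵥ y ⬝ᵥ b := by rw [dotProduct_mulVec, mulVec_transpose]
  have hnorm : A *ᵥ b ⬝ᵥ A *ᵥ b = b ⬝ᵥ b := by
    rw [dotProduct_mulVec, ← mulVec_transpose, mulVec_mulVec, hA, one_mulVec]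
  have hsq : ∑ i, (y i - (A *ᵥ b) i) ^ 2 = y ⬝ᵥ y - 2 * (Aᵀ *ᵥ y ⬝ᵥ b) + b ⬝ᵥ b := by
    rw [← hcross, ← hnorm]
    simp only [dotProduct, Finset.mul_sum, ← Finset.sum_sub_distrib, ← Finset.sum_add_distrib]
    exact Finset.sum_congr rfl fun i _ => by ring
  rw [lassoObjective, hsq]
  simp only [scalarLasso, dotProduct, Finset.sum_add_distrib, Finset.sum_sub_distrib,
    ← Finset.mul_sum, sq]
  ring

theorem sign_eq_of_isMin_lassoObjective_of_orthonormal {A : Matrix m p ℝ} (hA : Aᵀ * A = 1)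
    {y : m → ℝ} {lam : ℝ} {β w : p → ℝ} (hy : Aᵀ *ᵥ y = β + w) (hw : ∀ j, |w j| < lam)
    (hβ : ∀ j, β j ≠ 0 → 2 * lam ≤ |β j|) {u : p → ℝ}
    (hu : ∀ b, lassoObjective A y lam u ≤ lassoObjective A y lam b) (j : p) :
    Real.sign (u j) = Real.sign (β j) := by
  have hsep : ∀ b : p → ℝ, ∑ k, scalarLasso ((Aᵀ *ᵥ y) k) lam (u k)
      ≤ ∑ k, scalarLasso ((Aᵀ *ᵥ y) k) lam (b k) := fun b => by
    have h := hu b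
    rw [lassoObjective_eq_of_orthonormal hA, lassoObjective_eq_of_orthonormal hA] at h
    linarith
  refine sign_eq_of_isMin_scalarLasso (apply_le_of_forall_sum_le hsep j) ?_ (hβ j)
  simpa [hy] using hw j

end Lasso

theorem preconditioned_lasso_sign_consistency_low_dim_general
    {Ω : Type*} [MeasurableSpace Ω] (P : Measure Ω) [IsProbabilityMeasure P]
    (n p : ℕ) (hnp : p ≤ n) (hp : 1 ≤ p)
    (X : Matrix (Fin n) (Fin p) ℝ)
    (U : Matrix (Fin n) (Fin p) ℝ) (d : Fin p → ℝ) (V : Matrix (Fin p) (Fin p) ℝ)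
    (hd : ∀ i, 0 < d i)
    (hU : Uᵀ * U = 1) (hV : Vᵀ * V = 1) (hV' : V * Vᵀ = 1)
    (hSVD : X = U * Matrix.diagonal d * Vᵀ)
    (Cmin : ℝ) (hCmin : 0 < Cmin)
    (heig : ∀ v : Fin p → ℝ,
      Cmin * (∑ j, v j ^ 2) ≤ (1 / (n : ℝ)) * (v ⬝ᵥ (Xᵀ * X).mulVec v))
    (F : Matrix (Fin n) (Fin n) ℝ) (hF : F = U * (Matrix.diagonal d)⁻¹ * Uᵀ)
    (σ : ℝ)
    (βstar : Fin p → ℝ)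
    (ε : Ω → Fin n → ℝ)
    (hε : IsGaussianVector P ε 0 (σ ^ 2 • (1 : Matrix (Fin n) (Fin n) ℝ)))
    (Y : Ω → Fin n → ℝ) (hY : ∀ ω, Y ω = X.mulVec βstar + ε ω)
    (lam : ℝ) (hlam : 0 < lam)
    (hsignal : ∀ j, βstar j ≠ 0 → 2 * lam ≤ |βstar j|)
    (βhat : Ω → Fin p → ℝ)
    (hmin : ∀ ω, ∀ b : Fin p → ℝ,
      (1 / 2) * (∑ i, (F.mulVec (Y ω) i - (F * X).mulVec (βhat ω) i) ^ 2)
          + lam * ∑ j, |βhat ω j|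
        ≤ (1 / 2) * (∑ i, (F.mulVec (Y ω) i - (F * X).mulVec b i) ^ 2)
          + lam * ∑ j, |b j|) :
    P {ω | ∀ j, Real.sign (βhat ω j) = Real.sign (βstar j)}
      ≥ ENNReal.ofReal (1 - 2 * p
          * Real.exp (-((n : ℝ) * lam ^ 2 * Cmin) / (2 * σ ^ 2))) := by
  have hn : (0 : ℝ) < n := by exact_mod_cast hp.trans hnp
  have hd0 : ∀ i, d i ≠ 0 := fun i => (hd i).ne'
  have hFX : F * X = U * Vᵀ := by rw [hF, hSVD]; exact puffer_mul_svd hd0 hU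
  have hA : (F * X)ᵀ * (F * X) = 1 := hFX ▸ transpose_mul_self_of_orthonormal hU hV'
  set M := (F * X)ᵀ * F with hM
  have hnoise : ∀ ω, (F * X)ᵀ *ᵥ (F *ᵥ Y ω) = βstar + M *ᵥ ε ω := fun ω => by
    rw [hY, mulVec_add, mulVec_add, mulVec_mulVec, mulVec_mulVec, mulVec_mulVec,
      Matrix.mul_assoc _ F X, hA, one_mulVec]
  have hsv : ∀ k, n * Cmin ≤ d k ^ 2 := le_sq_of_forall_le_quadForm_svd hU hV fun v => by
    rw [← hSVD, mul_assoc, ← le_div_iff₀' hn, ← one_div_mul_eq_div]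
    exact heig v
  have hrow : ∀ j, n * Cmin * (M j ⬝ᵥ M j) ≤ 1 := by
    rw [hM, hFX, hF, transpose_mul_puffer hd0 hU]
    exact mul_dotProduct_self_row_le_one hU hV' hsv
  have hgood := ofReal_one_sub_le_measure_iInter_compl _
    fun j => hε.measureReal_abs_dotProduct_ge_le (by positivity) (hrow j) hlam.le
  refine (le_of_eq ?_).trans (hgood.trans (measure_mono fun ω hω =>
    sign_eq_of_isMin_lassoObjective_of_orthonormal hA (hnoise ω)
      (fun j => not_le.mp (Set.mem_iInter.mp hω j)) hsignal (hmin ω)))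
  rw [Fintype.card_fin, mul_right_comm (n : ℝ) Cmin]
  congr 1
  ring

/-- **Sign consistency of the preconditioned Lasso, low-dimensional case.**
For the linear model `Y = X β* + ε`, `ε ∼ N(0, σ² I_n)`, `n ≥ p`, `rank X = p`,
`Λ_min(n⁻¹ XᵀX) ≥ C̃_min > 0`, let `F = U D⁻¹ Uᵀ` be the Puffer transform and
`β̃(λ)` any minimizer of the preconditioned Lasso objective
`(1/2)‖FY − FX b‖² + λ‖b‖₁`.  If `min_{j∈S} |β*_j| ≥ 2λ`, then
`sign(β̃(λ)) = sign(β*)` with probability at least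
`1 − 2p·exp(−n λ² C̃_min/(2σ²))`. -/
theorem preconditioned_lasso_sign_consistency_low_dim
    {Ω : Type*} [MeasurableSpace Ω] (P : Measure Ω) [IsProbabilityMeasure P]
    (n p : ℕ) (hnp : p ≤ n) (hp : 1 ≤ p)
    (X : Matrix (Fin n) (Fin p) ℝ) (hrank : X.rank = p)
    (U : Matrix (Fin n) (Fin p) ℝ) (d : Fin p → ℝ) (V : Matrix (Fin p) (Fin p) ℝ)
    (hd : ∀ i, 0 < d i)
    (hU : Uᵀ * U = 1) (hV : Vᵀ * V = 1) (hV' : V * Vᵀ = 1)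
    (hSVD : X = U * Matrix.diagonal d * Vᵀ)
    (Cmin : ℝ) (hCmin : 0 < Cmin)
    (heig : ∀ v : Fin p → ℝ,
      Cmin * (∑ j, v j ^ 2) ≤ (1 / (n : ℝ)) * (v ⬝ᵥ (Xᵀ * X).mulVec v))
    (F : Matrix (Fin n) (Fin n) ℝ) (hF : F = U * (Matrix.diagonal d)⁻¹ * Uᵀ)
    (σ : ℝ) (hσ : 0 < σ)
    (βstar : Fin p → ℝ)
    (ε : Ω → Fin n → ℝ)
    (hε : IsGaussianVector P ε 0 (σ ^ 2 • (1 : Matrix (Fin n) (Fin n) ℝ)))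
    (Y : Ω → Fin n → ℝ) (hY : ∀ ω, Y ω = X.mulVec βstar + ε ω)
    (lam : ℝ) (hlam : 0 < lam)
    (hsignal : ∀ j, βstar j ≠ 0 → 2 * lam ≤ |βstar j|)
    (βhat : Ω → Fin p → ℝ)
    (hmin : ∀ ω, ∀ b : Fin p → ℝ,
      (1 / 2) * (∑ i, (F.mulVec (Y ω) i - (F * X).mulVec (βhat ω) i) ^ 2)
          + lam * ∑ j, |βhat ω j|
        ≤ (1 / 2) * (∑ i, (F.mulVec (Y ω) i - (F * X).mulVec b i) ^ 2)
          + lam * ∑ j, |b j|) :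
    P {ω | ∀ j, Real.sign (βhat ω j) = Real.sign (βstar j)}
      ≥ ENNReal.ofReal (1 - 2 * p
          * Real.exp (-((n : ℝ) * lam ^ 2 * Cmin) / (2 * σ ^ 2))) :=
  preconditioned_lasso_sign_consistency_low_dim_general P n p hnp hp X U d V hd hU hV hV' hSVD Cmin
    hCmin heig F hF σ βstar ε hε Y hY lam hlam hsignal βhat hmin
end
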